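/- Define functions E_m : (0,∞) → ℝ recursively by E_0(t) = (4πt)^{-1/2} and E_m(t) = −(e^{(2m−1)t}/(2(2m−1)π)) E'_{m−1}(t) for m ≥ 1. Then for every m ≥ 1 and t > 0, E_m(t) = (4πt)^{-(2m+1)/2} e^{m²t} Σ_{k=0}^{m−1} (−1)^k (Γ(m−k+1/2)/Γ(m+1/2)) c_{m,k} t^k, where c_{m,0} = 1 and c_{m,k} = Σ_{1 ≤ i_1 < ⋯ < i_k ≤ m−1} i_1² ⋯ i_k² for 1 ≤ k ≤ m−1. -/

import Mathlib

/-!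
Write `E_m(t) = (4πt)^{-(2m+1)/2} e^{m²t} P_m(t)`. Differentiating such a profile turns the
recursion for `E_m` into the polynomial recursion `P_{m+1} = P_m - (2/(2m+1)) X (m² P_m + P_m')`,
with `P_0 = 1`. On coefficients this is
`(2m+1) a_{m+1,k+1} = (2m-2k-1) a_{m,k+1} - 2m² a_{m,k}`, which for the claimed
`a_{m,k} = (-1)^k Γ(m-k+1/2)/Γ(m+1/2) c_{m,k}` follows from `Γ(x+1) = xΓ(x)` and the Pascal rule
`c_{m+1,k+1} = c_{m,k+1} + m² c_{m,k}` for elementary symmetric functions; the induction can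
start at `m = 0`, where the formula gives `a_{0,k} = δ_{k,0}`. Since `c_{m,k} = 0` for
`k ≥ m ≥ 1`, `P_m` has degree less than `m`.
-/

open Real Finset

/-- `c m k` is the `k`-th elementary symmetric polynomial of `1², 2², …, (m-1)²`. -/
noncomputable def c (m k : ℕ) : ℝ :=
  ∑ A ∈ (Finset.Icc 1 (m - 1)).powersetCard k, ∏ i ∈ A, (i : ℝ) ^ 2

theorem Multiset.esymm_cons_succ {R : Type*} [CommSemiring R] (a : R) (s : Multiset R) (n : ℕ) :
    (a ::ₘ s).esymm (n + 1) = s.esymm (n + 1) + a * s.esymm n := by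
  simp [Multiset.esymm, Multiset.powersetCard_cons, Multiset.sum_map_mul_left]

lemma c_zero (m : ℕ) : c m 0 = 1 := by simp [c]

lemma c_eq_zero_of_lt {m k : ℕ} (h : m - 1 < k) : c m k = 0 := by
  rw [c, Finset.powersetCard_eq_empty.mpr (by simpa using h), sum_empty]

lemma c_succ_succ (m k : ℕ) : c (m + 1) (k + 1) = c m (k + 1) + (m : ℝ) ^ 2 * c m k := by
  rcases m with _ | j
  · simp [c_eq_zero_of_lt]
  have hIcc : Icc 1 (j + 1) = cons (j + 1) (Icc 1 j) (by simp) := by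
    rw [cons_eq_insert, insert_Icc_right_eq_Icc_add_one (by omega)]
  simp only [c, ← Finset.esymm_map_val, add_tsub_cancel_right, hIcc, cons_val, Multiset.map_cons,
    Multiset.esymm_cons_succ]

lemma Real.Gamma_int_add_half_add_one (n : ℤ) :
    Gamma (n + 1 / 2 + 1) = (n + 1 / 2) * Gamma (n + 1 / 2) := by
  refine Gamma_add_one fun h => ?_
  have : (2 * n + 1 : ℝ) = 0 := by linarith
  have : 2 * n + 1 = 0 := by exact_mod_cast this
  omega

noncomputable def heatCoeff (m k : ℕ) : ℝ :=
  (-1 : ℝ) ^ k * (Gamma ((m : ℝ) - (k : ℝ) + 1 / 2) / Gamma ((m : ℝ) + 1 / 2)) * c m k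

lemma heatCoeff_zero (m : ℕ) : heatCoeff m 0 = 1 := by
  simp only [heatCoeff, c_zero, pow_zero, Nat.cast_zero, sub_zero, one_mul, mul_one]
  exact div_self (Gamma_pos_of_pos (by positivity)).ne'

lemma heatCoeff_eq_zero_of_lt {m k : ℕ} (h : m - 1 < k) : heatCoeff m k = 0 := by
  simp [heatCoeff, c_eq_zero_of_lt h]

lemma heatCoeff_succ_succ (m k : ℕ) :
    heatCoeff (m + 1) (k + 1) = heatCoeff m (k + 1) -
      2 / (2 * m + 1) * (m ^ 2 * heatCoeff m k + (k + 1) * heatCoeff m (k + 1)) := by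
  have hΓ : 0 < Gamma ((m : ℝ) + 1 / 2) := Gamma_pos_of_pos (by positivity)
  have hm : Gamma (((m + 1 : ℕ) : ℝ) + 1 / 2) = (m + 1 / 2) * Gamma ((m : ℝ) + 1 / 2) := by
    rw [← Gamma_add_one (by positivity)]; congr 1; push_cast; ring
  have hk : Gamma ((m : ℝ) - k + 1 / 2) =
      (m - (k + 1 : ℕ) + 1 / 2) * Gamma (m - (k + 1 : ℕ) + 1 / 2) := by
    have := Gamma_int_add_half_add_one (m - (k + 1))
    push_cast at this ⊢
    rw [← this]; congr 1; ring
  have hshift :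
      Gamma (((m + 1 : ℕ) : ℝ) - (k + 1 : ℕ) + 1 / 2) = Gamma ((m : ℝ) - k + 1 / 2) := by
    congr 1; push_cast; ring
  simp only [heatCoeff, c_succ_succ, hm, hshift, hk]
  field_simp
  push_cast
  ring

open Polynomial

noncomputable def heatPoly : ℕ → ℝ[X]
  | 0 => 1
  | m + 1 => heatPoly m -
      C (2 / (2 * (m : ℝ) + 1)) * (X * (C ((m : ℝ) ^ 2) * heatPoly m + derivative (heatPoly m)))

lemma coeff_heatPoly (m k : ℕ) : (heatPoly m).coeff k = heatCoeff m k := by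
  induction m generalizing k with
  | zero =>
    rcases k with _ | k
    · simp [heatPoly, heatCoeff_zero]
    · simp [heatPoly, heatCoeff_eq_zero_of_lt, coeff_one]
  | succ m ih =>
    rcases k with _ | k
    · simp [heatPoly, ih, heatCoeff_zero]
    · simp only [heatPoly, coeff_sub, coeff_C_mul, coeff_X_mul, coeff_add, coeff_derivative, ih,
        heatCoeff_succ_succ]
      ring

lemma natDegree_heatPoly_lt {m : ℕ} (hm : 1 ≤ m) : (heatPoly m).natDegree < m := by
  have : (heatPoly m).natDegree ≤ m - 1 :=
    natDegree_le_iff_coeff_eq_zero.mpr fun k hk => by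
      rw [coeff_heatPoly, heatCoeff_eq_zero_of_lt (by exact_mod_cast hk)]
  omega

lemma eval_heatPoly {m : ℕ} (hm : 1 ≤ m) (t : ℝ) :
    (heatPoly m).eval t = ∑ k ∈ range m, heatCoeff m k * t ^ k := by
  simp only [eval_eq_sum_range' (natDegree_heatPoly_lt hm), coeff_heatPoly]

noncomputable def heatProfile (n μ : ℝ) (p : ℝ[X]) (t : ℝ) : ℝ :=
  (4 * π * t) ^ (-n / 2) * exp (μ * t) * p.eval t

lemma heatProfile_step {n : ℝ} (hn : n ≠ 0) (μ : ℝ) (p : ℝ[X]) {t : ℝ} (ht : 0 < t) :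
    -(exp (n * t) / (2 * n * π)) * deriv (heatProfile n μ p) t =
      heatProfile (n + 2) (μ + n) (p - C (2 / n) * (X * (C μ * p + derivative p))) t := by
  have h4πt : 4 * π * t ≠ 0 := by positivity
  have h1 := ((hasDerivAt_id t).const_mul (4 * π)).rpow_const (p := -n / 2) (Or.inl h4πt)
  have h2 := ((hasDerivAt_id t).const_mul μ).exp
  simp only [id, mul_one] at h1 h2
  have hderiv : HasDerivAt (heatProfile n μ p) _ t := (h1.fun_mul h2).fun_mul (p.hasDerivAt t)
  rw [hderiv.deriv, heatProfile, show -(n + 2) / 2 = -n / 2 - 1 by ring, rpow_sub_one h4πt,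
    add_mul μ, exp_add]
  simp only [eval_sub, eval_mul, eval_C, eval_X, eval_add]
  field_simp
  ring

lemma eqOn_heatProfile_of_recursion (E : ℕ → ℝ → ℝ)
    (hE0 : ∀ t ∈ Set.Ioi (0 : ℝ), E 0 t = (4 * π * t) ^ (-(1 : ℝ) / 2))
    (hErec : ∀ m : ℕ, 1 ≤ m → ∀ t ∈ Set.Ioi (0 : ℝ),
      E m t = -(exp ((2 * (m : ℝ) - 1) * t) / (2 * (2 * (m : ℝ) - 1) * π)) *
        deriv (E (m - 1)) t)
    (m : ℕ) : Set.EqOn (E m) (heatProfile (2 * m + 1) (m ^ 2) (heatPoly m)) (Set.Ioi 0) := by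
  induction m with
  | zero => intro t ht; simp [hE0 t ht, heatProfile, heatPoly]
  | succ m ih =>
    intro t ht
    have hderiv : deriv (E m) t = deriv (heatProfile (2 * m + 1) (m ^ 2) (heatPoly m)) t :=
      Filter.EventuallyEq.deriv_eq (Filter.eventuallyEq_of_mem (isOpen_Ioi.mem_nhds ht) ih)
    have hn : 2 * ((m + 1 : ℕ) : ℝ) - 1 = 2 * m + 1 := by push_cast; ring
    have hn' : 2 * ((m + 1 : ℕ) : ℝ) + 1 = 2 * m + 1 + 2 := by push_cast; ring
    have hμ : ((m + 1 : ℕ) : ℝ) ^ 2 = m ^ 2 + (2 * m + 1) := by push_cast; ring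
    rw [hErec (m + 1) (by omega) t ht, add_tsub_cancel_right, hderiv, hn,
      heatProfile_step (by positivity) _ _ ht, hn', hμ, heatPoly]

/-- The small-time asymptotic of the diagonal of the heat kernel of the
`(2m+1)`-dimensional unit sphere: starting from `E₀(t) = (4πt)^{-1/2}` and iterating
`E_m(t) = -(e^{(2m-1)t}/(2(2m-1)π)) E'_{m-1}(t)`, one has
`E_m(t) = (4πt)^{-(2m+1)/2} e^{m²t} Σ_{k=0}^{m-1} (-1)^k (Γ(m-k+1/2)/Γ(m+1/2)) c_{m,k} t^k`. -/
theorem spherical_diagonal_asymptotic (E : ℕ → ℝ → ℝ)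
    (hE0 : ∀ t ∈ Set.Ioi (0 : ℝ), E 0 t = (4 * π * t) ^ (-(1 : ℝ) / 2))
    (hErec : ∀ m : ℕ, 1 ≤ m → ∀ t ∈ Set.Ioi (0 : ℝ),
      E m t = -(Real.exp ((2 * (m : ℝ) - 1) * t) / (2 * (2 * (m : ℝ) - 1) * π)) *
        deriv (E (m - 1)) t) :
    ∀ m : ℕ, 1 ≤ m → ∀ t ∈ Set.Ioi (0 : ℝ),
      E m t = (4 * π * t) ^ (-(2 * (m : ℝ) + 1) / 2) * Real.exp ((m : ℝ) ^ 2 * t) *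
        ∑ k ∈ Finset.range m,
          (-1 : ℝ) ^ k * (Real.Gamma ((m : ℝ) - (k : ℝ) + 1 / 2) / Real.Gamma ((m : ℝ) + 1 / 2)) *
            c m k * t ^ k := by
  intro m hm t ht
  rw [eqOn_heatProfile_of_recursion E hE0 hErec m ht, heatProfile, eval_heatPoly hm]
  rfl
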